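/- There exist constants c_1, c_2 > 0 and an integer K such that for every integer k ≥ K: if a finite connected graph of metric dimension at most k contains the n-dimensional hypercube Q_n as a subgraph, then n ≤ c_2 · k · log k, and there exists a finite connected graph of metric dimension at most k containing Q_n as a subgraph with n ≥ c_1 · k · log k. That is, the maximum n for which a graph of metric dimension at most k contains Q_n as a subgraph is Θ(k log k). -/

import Mathlib

open SimpleGraph

/-- `S` is a resolving set for `G`: any two distinct vertices are distinguished
by their graph distance to some landmark in `S`. -/
def IsResolvingSet {V : Type*} (G : SimpleGraph V) (S : Set V) : Prop :=
  ∀ u v : V, u ≠ v → ∃ w ∈ S, G.dist u w ≠ G.dist v w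

/-- The metric dimension of `G`: the least size of a (finite) resolving set. -/
noncomputable def metricDim {V : Type*} (G : SimpleGraph V) : ℕ :=
  sInf {k | ∃ S : Finset V, IsResolvingSet G ↑S ∧ S.card = k}

/-- Distance from an edge `e = {u,v}` to a vertex `w`: `min (d(u,w)) (d(v,w))`. -/
noncomputable def edgeDist {V : Type*} (G : SimpleGraph V) (e : Sym2 V) (w : V) : ℕ :=
  Sym2.lift ⟨fun u v => min (G.dist u w) (G.dist v w), fun u v => by simp [min_comm]⟩ e

/-- `S` is an edge resolving set for `G`: any two distinct edges are distinguished
by their distance to some landmark in `S`. -/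
def IsEdgeResolvingSet {V : Type*} (G : SimpleGraph V) (S : Set V) : Prop :=
  ∀ e ∈ G.edgeSet, ∀ f ∈ G.edgeSet, e ≠ f → ∃ w ∈ S, edgeDist G e w ≠ edgeDist G f w

/-- The edge metric dimension of `G`: the least size of a (finite) edge resolving set. -/
noncomputable def edgeMetricDim {V : Type*} (G : SimpleGraph V) : ℕ :=
  sInf {k | ∃ S : Finset V, IsEdgeResolvingSet G ↑S ∧ S.card = k}

/-- `G` contains `H` as a subgraph: there is an injective graph homomorphism `H → G`. -/
def Contains {V W : Type*} (G : SimpleGraph V) (H : SimpleGraph W) : Prop :=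
  ∃ f : H →g G, Function.Injective f

/-- The graph `D_k` on `ℤ_{≥0}^k`: distinct points are adjacent iff they differ
by at most 1 in every coordinate. -/
def Dgraph (k : ℕ) : SimpleGraph (Fin k → ℕ) where
  Adj x y := x ≠ y ∧ ∀ i, x i ≤ y i + 1 ∧ y i ≤ x i + 1
  symm := ⟨fun _x _y h => ⟨h.1.symm, fun i => ⟨(h.2 i).2, (h.2 i).1⟩⟩⟩
  loopless := ⟨fun _x h => h.1 rfl⟩

/-- The `n`-dimensional hypercube `Q_n` on vertex set `{0,1}^n`: two vertices are
adjacent iff they differ in exactly one coordinate. -/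
def hypercubeGraph (n : ℕ) : SimpleGraph (Fin n → Fin 2) where
  Adj x y := ∃! i, x i ≠ y i
  symm := by
    constructor
    rintro x y ⟨i, hi, hu⟩
    exact ⟨i, hi.symm, fun j hj => hu j hj.symm⟩
  loopless := by
    constructor
    rintro x ⟨i, hi, _⟩
    exact hi rfl

/-!
Upper bound: if `S` resolves `G` and `f` embeds `Q_n`, the vectors `(d(f x, w))_{w ∈ S}` separate
the `2^n` vertices `f x` and each coordinate ranges over an interval of length `2n` around
`d(f 0, w)`, so `2^n ≤ (2n+1)^k` and hence `n = O(k log k)`.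

Lower bound (coin weighing): for vertices `u ≠ v` of `Q_n` and a landmark `w`,
`d(u,w) - d(v,w) = ∑ⱼ ±(uⱼ - vⱼ)` with signs read off `w`. For a fixed nonzero `z ∈ {-1,0,1}^n`
with `s` nonzero entries, a uniformly random `w` balances `z` with probability
`C(s, s/2) / 2^s ≤ (s+1)^{-1/2}`. A union bound over all `z` shows that `2^(8d+3)` random
landmarks resolve `Q_n` for `n = d · 2^(8d)`.
-/

open Finset

section Hypercube

variable {n : ℕ}

lemma hammingDist_eq_one_of_adj {u v : Fin n → Fin 2} (h : (hypercubeGraph n).Adj u v) :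
    hammingDist u v = 1 := by
  obtain ⟨i, hi, huniq⟩ := h
  exact card_eq_one.2 ⟨i, by ext j; simpa using ⟨huniq j, fun h => h ▸ hi⟩⟩

lemma hammingDist_le_length {u v : Fin n → Fin 2} (p : (hypercubeGraph n).Walk u v) :
    hammingDist u v ≤ p.length := by
  induction p with
  | nil => simp
  | cons h p ih =>
    grw [hammingDist_triangle _ _ _, hammingDist_eq_one_of_adj h, ih, Walk.length_cons, add_comm]

lemma hammingDist_update_add_one {u v : Fin n → Fin 2} {i : Fin n} (hi : u i ≠ v i) :
    hammingDist (Function.update u i (v i)) v + 1 = hammingDist u v := by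
  have : ({j | Function.update u i (v i) j ≠ v j} : Finset _) =
      ({j | u j ≠ v j} : Finset _).erase i := by
    ext j
    by_cases hj : j = i <;> simp [hj]
  rw [hammingDist, this, card_erase_add_one (by simpa using hi), hammingDist]

lemma exists_walk_length_eq_hammingDist (u v : Fin n → Fin 2) :
    ∃ p : (hypercubeGraph n).Walk u v, p.length = hammingDist u v := by
  generalize hd : hammingDist u v = d
  induction d generalizing u with
  | zero => obtain rfl := hammingDist_eq_zero.1 hd; exact ⟨.nil, rfl⟩
  | succ d ih =>
    obtain ⟨i, hi⟩ : ∃ i, u i ≠ v i := by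
      by_contra! h
      simp [funext h] at hd
    have hadj : (hypercubeGraph n).Adj u (Function.update u i (v i)) :=
      ⟨i, by simpa using hi, fun j hj => by by_contra hji; simp [hji] at hj⟩
    have hd' := hammingDist_update_add_one hi
    obtain ⟨p, hp⟩ := ih (Function.update u i (v i)) (by omega)
    exact ⟨.cons hadj p, by simp [hp]⟩

lemma hypercubeGraph_dist (u v : Fin n → Fin 2) :
    (hypercubeGraph n).dist u v = hammingDist u v := by
  obtain ⟨p, hp⟩ := exists_walk_length_eq_hammingDist u v
  obtain ⟨q, hq⟩ := p.reachable.exists_walk_length_eq_dist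
  exact le_antisymm (hp ▸ dist_le p) (hq ▸ hammingDist_le_length q)

lemma hypercubeGraph_connected : (hypercubeGraph n).Connected :=
  (connected_iff _).2
    ⟨fun u v => (exists_walk_length_eq_hammingDist u v).elim fun p _ => p.reachable, ⟨0⟩⟩

lemma dist_map_le_hammingDist {V : Type*} {G : SimpleGraph V} (f : hypercubeGraph n →g G)
    (u v : Fin n → Fin 2) : G.dist (f u) (f v) ≤ hammingDist u v := by
  obtain ⟨p, hp⟩ := exists_walk_length_eq_hammingDist u v
  simpa [hp] using dist_le (p.map f)

end Hypercube

section Resolving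

variable {V : Type*} {G : SimpleGraph V}

lemma metricDim_le_card {S : Finset V} (hS : IsResolvingSet G S) : metricDim G ≤ #S :=
  Nat.sInf_le ⟨S, hS, rfl⟩

lemma exists_isResolvingSet_card_eq_metricDim [Fintype V] (hG : G.Connected) :
    ∃ S : Finset V, IsResolvingSet G S ∧ #S = metricDim G := by
  have huniv : IsResolvingSet G (univ : Finset V) := fun u v huv =>
    ⟨u, by simp, by simpa [eq_comm] using (hG.pos_dist_of_ne huv.symm).ne'⟩
  have hne : {k | ∃ S : Finset V, IsResolvingSet G S ∧ #S = k}.Nonempty := ⟨_, univ, huniv, rfl⟩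
  exact Nat.sInf_mem hne

lemma card_le_of_isResolvingSet (hG : G.Connected) {S : Finset V} (hS : IsResolvingSet G S)
    {X : Finset V} {x₀ : V} {r : ℕ} (hX : ∀ x ∈ X, G.dist x₀ x ≤ r) :
    #X ≤ (2 * r + 1) ^ #S := by
  classical
  let box : Finset (S → ℤ) :=
    Fintype.piFinset fun w => Icc ((G.dist x₀ w : ℤ) - r) (G.dist x₀ w + r)
  have hmaps : Set.MapsTo (fun x (w : S) => (G.dist x w : ℤ)) X box := by
    intro x hx
    simp only [box, mem_coe, Fintype.mem_piFinset, mem_Icc]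
    intro w
    have h₁ := hG.dist_triangle (u := x) (v := x₀) (w := w)
    have h₂ := hG.dist_triangle (u := x₀) (v := x) (w := w)
    have h₃ := hX x hx
    have h₄ : G.dist x x₀ = G.dist x₀ x := dist_comm
    omega
  have hinj : Set.InjOn (fun x (w : S) => (G.dist x w : ℤ)) X := by
    intro x _ y _ hxy
    by_contra hne
    obtain ⟨w, hw, hd⟩ := hS x y hne
    exact hd (by simpa using congrFun hxy ⟨w, hw⟩)
  have hside (d : ℤ) : (d + r + 1 - (d - r)).toNat = 2 * r + 1 := by omega
  calc #X ≤ #box := card_le_card_of_injOn _ hmaps hinj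
    _ = (2 * r + 1) ^ #S := by simp [box, Fintype.card_piFinset, Int.card_Icc, hside]

end Resolving

lemma two_pow_le_of_contains {V : Type*} {G : SimpleGraph V} (hG : G.Connected) {S : Finset V}
    (hS : IsResolvingSet G S) {n : ℕ} (hQ : Contains G (hypercubeGraph n)) :
    2 ^ n ≤ (2 * n + 1) ^ #S := by
  classical
  obtain ⟨f, hf⟩ := hQ
  have hball : ∀ x ∈ univ.image f, G.dist (f 0) x ≤ n := by
    simp only [mem_image, mem_univ, true_and, forall_exists_index, forall_apply_eq_imp_iff]
    exact fun u => (dist_map_le_hammingDist f 0 u).trans hammingDist_le_card_fintype |>.trans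
      (by simp)
  simpa [card_image_of_injective _ hf] using card_le_of_isResolvingSet hG hS hball

lemma le_mul_log_of_two_pow_le {n k : ℕ} (hk : 3 ≤ k) (h : 2 ^ n ≤ (2 * n + 1) ^ k) :
    (n : ℝ) ≤ 10 * k * Real.log k := by
  have hk3 : (3 : ℝ) ≤ k := by exact_mod_cast hk
  have hk0 : (0 : ℝ) < k := by positivity
  have hlogk : 1 ≤ Real.log k := by
    rw [Real.le_log_iff_exp_le hk0]
    linarith [Real.exp_one_lt_d9]
  have hlog : n * Real.log 2 ≤ k * Real.log (2 * n + 1) := by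
    have h' : (2 : ℝ) ^ n ≤ (2 * n + 1) ^ k := by exact_mod_cast h
    simpa [Real.log_pow] using Real.log_le_log (by positivity) h'
  have hlog4 : Real.log 4 = 2 * Real.log 2 := by
    rw [show (4 : ℝ) = 2 ^ 2 by norm_num, Real.log_pow, Nat.cast_ofNat]
  -- `log y ≤ y - 1` at `y = (2n+1)/(4k)` makes the right-hand side linear in `n`
  have hy := Real.log_le_sub_one_of_pos (show 0 < (2 * n + 1 : ℝ) / (4 * k) by positivity)
  rw [Real.log_div (by positivity) (by positivity), Real.log_mul (by norm_num) hk0.ne',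
    hlog4] at hy
  have hy' := mul_le_mul_of_nonneg_left hy hk0.le
  rw [show (k : ℝ) * ((2 * n + 1) / (4 * k) - 1) = (2 * n + 1) / 4 - k by field_simp] at hy'
  have h₁ := mul_le_mul_of_nonneg_left Real.log_two_gt_d9.le (Nat.cast_nonneg (α := ℝ) n)
  have h₂ := mul_le_mul_of_nonneg_left Real.log_two_lt_d9.le hk0.le
  have h₃ : (k : ℝ) ≤ k * Real.log k := le_mul_of_one_le_right hk0.le hlogk
  linarith

section Weighing

variable {n : ℕ}

def ternaryVectors (n : ℕ) : Finset (Fin n → ℤ) := Fintype.piFinset fun _ => {-1, 0, 1}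

def spin (b : Fin 2) : ℤ := if b = 0 then 1 else -1

def weigh (w : Fin n → Fin 2) (z : Fin n → ℤ) : ℤ := ∑ j, spin (w j) * z j

def balancers (z : Fin n → ℤ) : Finset (Fin n → Fin 2) := {w | weigh w z = 0}

lemma mem_ternaryVectors {z : Fin n → ℤ} :
    z ∈ ternaryVectors n ↔ ∀ j, z j = -1 ∨ z j = 0 ∨ z j = 1 := by
  simp [ternaryVectors]

lemma hammingDist_sub_hammingDist (u v w : Fin n → Fin 2) :
    (hammingDist u w : ℤ) - hammingDist v w = weigh w fun j => ((u j : ℕ) : ℤ) - (v j : ℕ) := by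
  simp only [hammingDist, natCast_card_filter, weigh, ← sum_sub_distrib]
  refine sum_congr rfl fun j _ => ?_
  generalize u j = a, v j = b, w j = c
  fin_cases a <;> fin_cases b <;> fin_cases c <;> simp [spin]

lemma isResolvingSet_of_forall_weigh_ne_zero {m : ℕ} (w : Fin m → Fin n → Fin 2)
    (hw : ∀ z ∈ (ternaryVectors n).erase 0, ∃ i, weigh (w i) z ≠ 0) :
    IsResolvingSet (hypercubeGraph n) ↑(univ.image w) := by
  intro u v huv
  have hz : (fun j => ((u j : ℕ) : ℤ) - (v j : ℕ)) ∈ (ternaryVectors n).erase 0 := by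
    refine mem_erase.2 ⟨fun h => huv (funext fun j => Fin.ext ?_), mem_ternaryVectors.2 fun j => ?_⟩
    · have := congrFun h j
      simp only [Pi.zero_apply] at this
      omega
    · have := (u j).isLt
      have := (v j).isLt
      omega
  obtain ⟨i, hi⟩ := hw _ hz
  refine ⟨w i, by simp, fun h => hi ?_⟩
  rw [← hammingDist_sub_hammingDist, ← hypercubeGraph_dist, ← hypercubeGraph_dist, h, sub_self]

end Weighing

section AntiConcentration

lemma succ_mul_centralBinom_sq_le (m : ℕ) : (2 * m + 1) * m.centralBinom ^ 2 ≤ 16 ^ m := by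
  induction m with
  | zero => simp
  | succ m ih =>
    refine Nat.le_of_mul_le_mul_left ?_ (show 0 < (m + 1) ^ 2 by positivity)
    calc (m + 1) ^ 2 * ((2 * (m + 1) + 1) * (m + 1).centralBinom ^ 2)
        = (2 * m + 3) * ((m + 1) * (m + 1).centralBinom) ^ 2 := by ring
      _ = 4 * (2 * m + 3) * (2 * m + 1) * ((2 * m + 1) * m.centralBinom ^ 2) := by
          rw [Nat.succ_mul_centralBinom_succ]; ring
      _ ≤ 4 * (2 * m + 3) * (2 * m + 1) * 16 ^ m := by gcongr
      _ ≤ 16 * (m + 1) ^ 2 * 16 ^ m := Nat.mul_le_mul_right _ (by nlinarith)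
      _ = (m + 1) ^ 2 * 16 ^ (m + 1) := by ring

variable {n : ℕ} {z : Fin n → ℤ}

lemma weigh_add_two_mul_card (hz : z ∈ ternaryVectors n) (w : Fin n → Fin 2) :
    weigh w z + 2 * #{j | spin (w j) * z j = -1} = hammingNorm z := by
  simp only [hammingNorm, natCast_card_filter, weigh, mul_sum, ← sum_add_distrib]
  refine sum_congr rfl fun j _ => ?_
  generalize w j = a
  rcases mem_ternaryVectors.1 hz j with h | h | h <;> fin_cases a <;> simp [h, spin]

lemma card_balancers_le (hz : z ∈ ternaryVectors n) :
    #(balancers z) ≤ (hammingNorm z).choose (hammingNorm z / 2) * 2 ^ (n - hammingNorm z) := by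
  set D : Finset (Fin n) := {j | z j ≠ 0}
  have hD : #D = hammingNorm z := rfl
  let φ (w : Fin n → Fin 2) : Finset (Fin n) × Finset (Fin n) :=
    (({j | spin (w j) * z j = -1} : Finset (Fin n)), {j ∈ Dᶜ | w j = 1})
  have hmaps : Set.MapsTo φ (balancers z) ↑(D.powersetCard (#D / 2) ×ˢ Dᶜ.powerset) := by
    intro w hw
    have hsum := weigh_add_two_mul_card hz w
    simp only [balancers, coe_filter, mem_univ, true_and, Set.mem_ofPred_eq] at hw
    simp only [φ, mem_coe, mem_product, mem_powersetCard, mem_powerset]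
    refine ⟨⟨fun j hj => ?_, by omega⟩, filter_subset _ _⟩
    simp only [D, mem_filter, mem_univ, true_and] at hj ⊢
    rintro h
    simp [h] at hj
  have hinj : Set.InjOn φ (balancers z) := by
    intro w _ w' _ h
    simp only [φ, Prod.mk.injEq, Finset.ext_iff, mem_filter, mem_univ, true_and, mem_compl,
      D] at h
    funext j
    have h₁ := h.1 j
    have h₂ := h.2 j
    generalize w j = a at h₁ h₂ ⊢
    generalize w' j = b at h₁ h₂ ⊢
    rcases mem_ternaryVectors.1 hz j with hj | hj | hj <;> fin_cases a <;> fin_cases b <;>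
      simp_all [spin]
  calc #(balancers z) ≤ #(D.powersetCard (#D / 2) ×ˢ Dᶜ.powerset) :=
        card_le_card_of_injOn φ hmaps hinj
    _ = _ := by simp [card_compl, hD]

lemma succ_hammingNorm_mul_card_balancers_sq_le (hz : z ∈ ternaryVectors n) :
    (hammingNorm z + 1) * #(balancers z) ^ 2 ≤ 4 ^ n := by
  rcases (balancers z).eq_empty_or_nonempty with h | ⟨w, hw⟩
  · simp [h]
  obtain ⟨m, hm⟩ : ∃ m, hammingNorm z = 2 * m := by
    have := weigh_add_two_mul_card hz w
    simp only [balancers, mem_filter, mem_univ, true_and] at hw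
    exact ⟨#{j | spin (w j) * z j = -1}, by omega⟩
  have hle := card_balancers_le hz
  rw [hm, Nat.mul_div_cancel_left _ two_pos, ← Nat.centralBinom_eq_two_mul_choose] at hle
  have h2m : 2 * m ≤ n := hm ▸ hammingNorm_le_card_fintype.trans (by simp)
  calc (hammingNorm z + 1) * #(balancers z) ^ 2
      ≤ (2 * m + 1) * (m.centralBinom * 2 ^ (n - 2 * m)) ^ 2 := by rw [hm]; gcongr
    _ = ((2 * m + 1) * m.centralBinom ^ 2) * 4 ^ (n - 2 * m) := by
        rw [mul_pow, ← pow_mul, mul_comm (n - 2 * m), pow_mul]; ring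
    _ ≤ 16 ^ m * 4 ^ (n - 2 * m) := by gcongr; exact succ_mul_centralBinom_sq_le m
    _ = 4 ^ n := by rw [show 16 = 4 ^ 2 by rfl, ← pow_mul, ← pow_add]; congr 1; omega

end AntiConcentration

lemma exists_forall_exists_notMem_of_sum_card_pow_lt {α ι : Type*} [Fintype α] [DecidableEq α]
    (I : Finset ι) (B : ι → Finset α) (m : ℕ)
    (h : ∑ i ∈ I, #(B i) ^ m < Fintype.card α ^ m) :
    ∃ f : Fin m → α, ∀ i ∈ I, ∃ j, f j ∉ B i := by
  have hlt : #(I.biUnion fun i => Fintype.piFinset fun _ : Fin m => B i)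
      < #(univ : Finset (Fin m → α)) :=
    calc _ ≤ ∑ i ∈ I, #(Fintype.piFinset fun _ : Fin m => B i) := card_biUnion_le
      _ = ∑ i ∈ I, #(B i) ^ m := by simp [Fintype.card_piFinset]
      _ < _ := h
      _ = _ := by simp
  obtain ⟨f, -, hf⟩ := exists_mem_notMem_of_card_lt_card hlt
  refine ⟨f, fun i hi => ?_⟩
  by_contra! hall
  exact hf (mem_biUnion.2 ⟨i, hi, Fintype.mem_piFinset.2 hall⟩)

section Detecting

variable {n : ℕ}

lemma sum_pow_hammingNorm_ternaryVectors (x : ℝ) :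
    ∑ z ∈ ternaryVectors n, x ^ hammingNorm z = (1 + 2 * x) ^ n := by
  have (z : Fin n → ℤ) : x ^ hammingNorm z = ∏ j, if z j ≠ 0 then x else 1 := by
    rw [← prod_filter, prod_const]; rfl
  rw [sum_congr rfl fun z _ => this z, ternaryVectors,
    ← prod_univ_sum (fun _ => {-1, 0, 1}) fun _ c => if c ≠ 0 then x else 1]
  simp
  ring

lemma one_add_two_mul_inv_pow_lt_eight (n : ℕ) : (1 + 2 * (n : ℝ)⁻¹) ^ n < 8 := by
  have hn : (-2 : ℝ) ≤ n := by linarith [Nat.cast_nonneg (α := ℝ) n]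
  calc (1 + 2 * (n : ℝ)⁻¹) ^ n = (1 - -2 / n) ^ n := by ring
    _ ≤ Real.exp 2 := by simpa using Real.one_sub_div_pow_le_exp_neg hn
    _ = Real.exp 1 * Real.exp 1 := by rw [← Real.exp_add]; norm_num
    _ < 8 := by nlinarith [Real.exp_one_lt_d9, Real.exp_pos 1]

/- Below `T` we use `(s + 1)⁻¹ ≤ 1/2`, padded by the factor `n ^ (T - s) ≥ 1` so that summing the
bound over `z` produces `(1 + 2/n) ^ n < e²`; from `T` on we use `(s + 1)⁻¹ ≤ 1/T`. -/
lemma inv_succ_pow_le {n s k T : ℕ} (hn : 1 ≤ n) (hs : 1 ≤ s) (hT : 0 < T) :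
    ((s + 1 : ℝ)⁻¹) ^ k ≤ (n : ℝ) ^ T / 2 ^ k * (n : ℝ)⁻¹ ^ s + 1 / T ^ k := by
  have hsmall : 0 ≤ (n : ℝ) ^ T / 2 ^ k * (n : ℝ)⁻¹ ^ s := by positivity
  have hlarge : 0 ≤ 1 / (T : ℝ) ^ k := by positivity
  rcases le_or_gt T (s + 1) with hTs | hTs
  · have : ((s + 1 : ℝ)⁻¹) ^ k ≤ 1 / T ^ k := by
      rw [inv_pow, one_div]
      gcongr
      exact_mod_cast hTs
    linarith
  · have h₁ : ((s + 1 : ℝ)⁻¹) ^ k ≤ 1 / 2 ^ k := by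
      rw [inv_pow, one_div]
      gcongr
      exact_mod_cast Nat.succ_le_succ hs
    have h₂ : 1 ≤ (n : ℝ) ^ T * (n : ℝ)⁻¹ ^ s := by
      rw [inv_pow, ← pow_sub₀ _ (by positivity) (by omega)]
      exact one_le_pow₀ (by exact_mod_cast hn)
    have h₃ : 1 / 2 ^ k ≤ (n : ℝ) ^ T / 2 ^ k * (n : ℝ)⁻¹ ^ s := by
      rw [div_mul_eq_mul_div]
      exact div_le_div_of_nonneg_right h₂ (by positivity)
    linarith

lemma sum_inv_succ_hammingNorm_pow_lt_one {k T : ℕ} (hn : 1 ≤ n) (hsmall : 16 * n ^ T ≤ 2 ^ k)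
    (hlarge : 2 * 3 ^ n ≤ T ^ k) :
    ∑ z ∈ (ternaryVectors n).erase 0, ((hammingNorm z + 1 : ℝ)⁻¹) ^ k < 1 := by
  have hT : 0 < T := by
    have h2 : 2 ≤ T ^ k := le_trans (by linarith [Nat.one_le_pow n 3 three_pos]) hlarge
    exact Nat.pos_of_ne_zero (by rintro rfl; cases k <;> simp at h2)
  set A : ℝ := n ^ T / 2 ^ k
  have hA : A ≤ 1 / 16 := by
    rw [div_le_div_iff₀ (by positivity) (by norm_num)]
    exact_mod_cast (by linarith : n ^ T * 16 ≤ 1 * 2 ^ k)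
  have hB : 3 ^ n / (T : ℝ) ^ k ≤ 1 / 2 := by
    rw [div_le_div_iff₀ (by positivity) (by norm_num)]
    exact_mod_cast (by linarith : 3 ^ n * 2 ≤ 1 * T ^ k)
  calc _ ≤ ∑ z ∈ ternaryVectors n, (A * (n : ℝ)⁻¹ ^ hammingNorm z + 1 / T ^ k) :=
        (sum_le_sum fun z hz => inv_succ_pow_le hn (hammingNorm_pos_iff.2 (ne_of_mem_erase hz))
          hT).trans (sum_le_sum_of_subset_of_nonneg (erase_subset _ _) fun _ _ _ => by positivity)
    _ = A * (1 + 2 * (n : ℝ)⁻¹) ^ n + 3 ^ n / T ^ k := by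
        rw [sum_add_distrib, ← mul_sum, sum_pow_hammingNorm_ternaryVectors, sum_const]
        simp [ternaryVectors, Fintype.card_piFinset, div_eq_mul_inv]
    _ < 1 := by nlinarith [one_add_two_mul_inv_pow_lt_eight n, show 0 < A by positivity]

end Detecting

lemma metricDim_hypercubeGraph_le {n k T : ℕ} (hn : 1 ≤ n) (hsmall : 16 * n ^ T ≤ 2 ^ k)
    (hlarge : 2 * 3 ^ n ≤ T ^ k) : metricDim (hypercubeGraph n) ≤ 2 * k := by
  have hbound : ∀ z ∈ (ternaryVectors n).erase 0,
      ((#(balancers z) : ℝ) / 2 ^ n) ^ (2 * k) ≤ ((hammingNorm z + 1 : ℝ)⁻¹) ^ k := by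
    intro z hz
    have h := succ_hammingNorm_mul_card_balancers_sq_le (mem_of_mem_erase hz)
    rw [pow_mul]
    gcongr
    rw [div_pow, ← pow_mul, mul_comm, pow_mul, div_le_iff₀ (by positivity), inv_mul_eq_div,
      le_div_iff₀ (by positivity)]
    exact_mod_cast (by linarith : #(balancers z) ^ 2 * (hammingNorm z + 1) ≤ 4 ^ n)
  have hsum : ∑ z ∈ (ternaryVectors n).erase 0, #(balancers z) ^ (2 * k)
      < Fintype.card (Fin n → Fin 2) ^ (2 * k) := by
    have := (sum_le_sum hbound).trans_lt (sum_inv_succ_hammingNorm_pow_lt_one hn hsmall hlarge)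
    simp_rw [div_pow] at this
    rw [← sum_div, div_lt_one (by positivity)] at this
    simpa using (by exact_mod_cast this : ∑ z ∈ (ternaryVectors n).erase 0,
      #(balancers z) ^ (2 * k) < (2 ^ n) ^ (2 * k))
  obtain ⟨w, hw⟩ := exists_forall_exists_notMem_of_sum_card_pow_lt _ balancers _ hsum
  calc metricDim (hypercubeGraph n) ≤ #(univ.image w) :=
        metricDim_le_card (isResolvingSet_of_forall_weigh_ne_zero w fun z hz => by
          simpa [balancers] using hw z hz)
    _ ≤ 2 * k := card_image_le.trans (by simp)

lemma metricDim_hypercubeGraph_le_two_pow {d : ℕ} (hd : 1 ≤ d) :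
    metricDim (hypercubeGraph (d * 2 ^ (8 * d))) ≤ 2 ^ (8 * d + 3) := by
  have hd2 : d < 2 ^ d := Nat.lt_two_pow_self
  have hn : d * 2 ^ (8 * d) ≤ 2 ^ (9 * d) := by
    rw [show 9 * d = d + 8 * d by ring, pow_add]; gcongr
  have hsmall : 16 * (d * 2 ^ (8 * d)) ^ 2 ^ d ≤ 2 ^ 2 ^ (8 * d + 2) := by
    have hexp : 4 + 9 * d * 2 ^ d ≤ 2 ^ (8 * d + 2) := by
      have : d * 2 ^ d ≤ 2 ^ d * 2 ^ d := by gcongr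
      have : 2 ^ (8 * d + 2) = (2 ^ d * 2 ^ d) * 2 ^ (6 * d + 2) := by
        rw [← pow_add, ← pow_add]; ring_nf
      have : 2 ^ 8 ≤ 2 ^ (6 * d + 2) := Nat.pow_le_pow_right two_pos (by omega)
      have : 1 ≤ 2 ^ d * 2 ^ d := Nat.one_le_iff_ne_zero.2 (by positivity)
      nlinarith
    calc 16 * (d * 2 ^ (8 * d)) ^ 2 ^ d ≤ 2 ^ 4 * (2 ^ (9 * d)) ^ 2 ^ d := by gcongr; norm_num
      _ = 2 ^ (4 + 9 * d * 2 ^ d) := by rw [← pow_mul, ← pow_add]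
      _ ≤ 2 ^ 2 ^ (8 * d + 2) := Nat.pow_le_pow_right two_pos hexp
  have hlarge : 2 * 3 ^ (d * 2 ^ (8 * d)) ≤ (2 ^ d) ^ 2 ^ (8 * d + 2) := by
    calc 2 * 3 ^ (d * 2 ^ (8 * d)) ≤ 2 ^ 1 * (2 ^ 2) ^ (d * 2 ^ (8 * d)) := by gcongr <;> norm_num
      _ = 2 ^ (1 + 2 * (d * 2 ^ (8 * d))) := by rw [← pow_mul, ← pow_add]
      _ ≤ 2 ^ (d * 2 ^ (8 * d + 2)) := by
          apply Nat.pow_le_pow_right two_pos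
          have : 1 ≤ d * 2 ^ (8 * d) := Nat.one_le_iff_ne_zero.2 (by positivity)
          rw [pow_add]; nlinarith
      _ = (2 ^ d) ^ 2 ^ (8 * d + 2) := by rw [← pow_mul]
  have h := metricDim_hypercubeGraph_le (Nat.one_le_iff_ne_zero.2 (by positivity)) hsmall hlarge
  rwa [← pow_succ'] at h

lemma exists_metricDim_hypercubeGraph_le {k : ℕ} (hk : 2 ^ 11 ≤ k) :
    ∃ n, metricDim (hypercubeGraph n) ≤ k ∧ k * Real.log k ≤ 2 ^ 16 * n := by
  set L := Nat.log 2 k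
  have hL : 11 ≤ L := Nat.le_log_of_pow_le one_lt_two hk
  set d := (L - 3) / 8
  have hd : 1 ≤ d := by omega
  refine ⟨d * 2 ^ (8 * d), (metricDim_hypercubeGraph_le_two_pow hd).trans ?_, ?_⟩
  · exact (Nat.pow_le_pow_right two_pos (by omega)).trans (Nat.pow_log_le_self 2 (by positivity))
  · have hkL : (k : ℝ) < 2 ^ (8 * d + 11) := by
      exact_mod_cast (Nat.lt_pow_succ_log_self one_lt_two k).trans_le
        (Nat.pow_le_pow_right two_pos (by omega))
    have hlog : Real.log k ≤ 8 * d + 11 := by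
      have := Real.log_le_log (by positivity) hkL.le
      rw [Real.log_pow] at this
      push_cast at this
      nlinarith [Real.log_two_lt_d9, Real.log_pos (one_lt_two (α := ℝ))]
    have hlogk : 0 ≤ Real.log k := Real.log_nonneg (by exact_mod_cast (by omega : 1 ≤ k))
    calc k * Real.log k ≤ 2 ^ (8 * d + 11) * (8 * d + 11) := by gcongr
      _ ≤ 2 ^ 16 * ↑(d * 2 ^ (8 * d)) := by
          push_cast
          rw [pow_add]
          have : (8 * d + 11 : ℝ) ≤ 32 * d := by
            have : (1 : ℝ) ≤ d := by exact_mod_cast hd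
            linarith
          nlinarith [pow_pos (two_pos (α := ℝ)) (8 * d)]

/-- the maximum `n` such that some finite connected graph of metric
dimension at most `k` contains the hypercube `Q_n` as a subgraph is `Θ(k log k)`. -/
theorem statement12 :
    ∃ (c₁ c₂ : ℝ), 0 < c₁ ∧ 0 < c₂ ∧ ∃ K : ℕ, ∀ k : ℕ, K ≤ k →
      (∀ (V : Type) [Fintype V], ∀ G : SimpleGraph V, G.Connected → metricDim G ≤ k →
        ∀ n : ℕ, Contains G (hypercubeGraph n) → (n : ℝ) ≤ c₂ * k * Real.log k) ∧
      (∃ (V : Type) (_ : Fintype V) (G : SimpleGraph V), G.Connected ∧ metricDim G ≤ k ∧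
        ∃ n : ℕ, c₁ * k * Real.log k ≤ (n : ℝ) ∧ Contains G (hypercubeGraph n)) := by
  refine ⟨(2 ^ 16)⁻¹, 10, by positivity, by norm_num, 2 ^ 11, fun k hk => ⟨?_, ?_⟩⟩
  · intro V _ G hG hdim n hQ
    obtain ⟨S, hS, hcard⟩ := exists_isResolvingSet_card_eq_metricDim hG
    refine le_mul_log_of_two_pow_le (le_trans (by norm_num) hk) ?_
    exact (two_pow_le_of_contains hG hS hQ).trans (Nat.pow_le_pow_right (by omega) (hcard ▸ hdim))
  · obtain ⟨n, hdim, hn⟩ := exists_metricDim_hypercubeGraph_le hk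
    refine ⟨_, inferInstance, hypercubeGraph n, hypercubeGraph_connected, hdim, n, ?_,
      ⟨Hom.id, fun _ _ h => h⟩⟩
    rw [mul_assoc, inv_mul_le_iff₀ (by positivity)]
    exact hn
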